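/- arXiv:2205.00901 — 4 statements merged into one kernel-verified Lean document; each statement's English description precedes it below -/
import Mathlib

section
/- Let Y be a countable sample space and let every P in H0 have full support on Y. Suppose S is a sharp e-variable for H0 (E_{P0}[S] = 1 for some P0 ∈ H0), and δ is a Type-I risk safe decision rule such that for some function B : Y → 𝓑 we have L_{B(y)}(δ_{B(y)}(y)) = S(y) for all y. Then δ is fully compatible with S: for all b ∈ 𝓑 and all y ∈ Y, L_b(δ_b(y)) ≤ S(y). -/
open MeasureTheory ENNReal

/-!
The maximal compatible e-variable `S'` witnessing Type-I risk safety dominates `S`, because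
`S` is attained by the losses of `δ`. Under the null `P0` on which `S` is sharp, `S'` has
expectation at most `1 = E_{P0}[S]`, so `S = S'` almost surely, and since `P0` charges every
point, everywhere.
-/

namespace MeasureTheory

variable {α : Type*} [MeasurableSpace α] {μ : Measure α}

theorem Measure.of_ae_of_measure_singleton_ne_zero {p : α → Prop} (hp : ∀ᵐ x ∂μ, p x)
    {a : α} (ha : μ {a} ≠ 0) : p a := by
  by_contra hpa
  exact ha (measure_mono_null (Set.singleton_subset_iff.2 hpa) (ae_iff.1 hp))

theorem Measure.eq_of_ae_eq_of_forall_measure_singleton_pos {β : Type*} {f g : α → β}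
    (hfg : f =ᵐ[μ] g) (hμ : ∀ a, 0 < μ {a}) : f = g :=
  funext fun a => of_ae_of_measure_singleton_ne_zero hfg (hμ a).ne'

theorem eq_of_le_of_lintegral_le_of_forall_measure_singleton_pos {f g : α → ℝ≥0∞}
    (hμ : ∀ a, 0 < μ {a}) (hfg : f ≤ g) (hg : AEMeasurable g μ)
    (hf : ∫⁻ a, f a ∂μ ≠ ∞) (hgf : ∫⁻ a, g a ∂μ ≤ ∫⁻ a, f a ∂μ) : f = g :=
  Measure.eq_of_ae_eq_of_forall_measure_singleton_pos
    (ae_eq_of_ae_le_of_lintegral_le (ae_of_all _ hfg) hf hg hgf) hμ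

end MeasureTheory

theorem equalizer_lemma_countable_general {Y 𝓑 : Type*} [MeasurableSpace Y]
    (H0 : Set (Measure Y))
    (hfull : ∀ P ∈ H0, ∀ y : Y, 0 < P {y})
    (A : 𝓑 → Type*) (L : (b : 𝓑) → A b → ℝ≥0∞) (δ : (b : 𝓑) → Y → A b)
    (S : Y → ℝ≥0∞)
    (hsharp : ∃ P0 ∈ H0, ∫⁻ y, S y ∂P0 = 1)
    (hsafe : ∃ S' : Y → ℝ≥0∞, Measurable S' ∧ (∀ P ∈ H0, ∫⁻ y, S' y ∂P ≤ 1) ∧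
      ∀ y : Y, ∀ b : 𝓑, L b (δ b y) ≤ S' y)
    (B : Y → 𝓑) (heq : ∀ y : Y, L (B y) (δ (B y) y) = S y) :
    ∀ b : 𝓑, ∀ y : Y, L b (δ b y) ≤ S y := by
  obtain ⟨S', hS'm, hS'e, hS'L⟩ := hsafe
  obtain ⟨P0, hP0, hSP0⟩ := hsharp
  have hSS' : S ≤ S' := fun y => heq y ▸ hS'L y (B y)
  have hS_eq : S = S' :=
    eq_of_le_of_lintegral_le_of_forall_measure_singleton_pos (hfull P0 hP0) hSS'
      hS'm.aemeasurable (hSP0 ▸ one_ne_top) (hSP0 ▸ hS'e P0 hP0)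
  intro b y
  rw [hS_eq]
  exact hS'L y b

/-- Equalizing maximal compatibility lemma, countable case: if S is a
sharp e-variable for H0 (full support on countable Y), δ is Type-I risk safe, and for
some B : Y → 𝓑 we have L_{B(y)}(δ_{B(y)}(y)) = S(y) for all y, then δ is fully
compatible with S. -/
theorem equalizer_lemma_countable {Y 𝓑 : Type*} [Countable Y] [MeasurableSpace Y]
    [MeasurableSingletonClass Y]
    (H0 : Set (Measure Y)) (hprob : ∀ P ∈ H0, IsProbabilityMeasure P)
    (hfull : ∀ P ∈ H0, ∀ y : Y, 0 < P {y})
    (A : 𝓑 → Type*) (L : (b : 𝓑) → A b → ℝ≥0∞) (δ : (b : 𝓑) → Y → A b)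
    (S : Y → ℝ≥0∞) (hSm : Measurable S)
    (hSe : ∀ P ∈ H0, ∫⁻ y, S y ∂P ≤ 1)
    (hsharp : ∃ P0 ∈ H0, ∫⁻ y, S y ∂P0 = 1)
    (hsafe : ∃ S' : Y → ℝ≥0∞, Measurable S' ∧ (∀ P ∈ H0, ∫⁻ y, S' y ∂P ≤ 1) ∧
      ∀ y : Y, ∀ b : 𝓑, L b (δ b y) ≤ S' y)
    (B : Y → 𝓑) (heq : ∀ y : Y, L (B y) (δ (B y) y) = S y) :
    ∀ b : 𝓑, ∀ y : Y, L b (δ b y) ≤ S y :=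
  equalizer_lemma_countable_general H0 hfull A L δ S hsharp hsafe B heq
end

section
/- In a simple GNP testing problem over countable Y with all P ∈ H0 of full support: if S is a sharp e-variable for H0, δ* is maximally compatible with S, and the problem is rich relative to S (for every value s in the range of S there exist b ∈ 𝓑 and a ∈ A_b with L_b(a) = s), then δ* is admissible. -/
open MeasureTheory ENNReal

variable {Y 𝓑 : Type*}

/-- δ is compatible with e-variable S: Type-I loss is bounded by S pointwise. -/
def Compatible (A : 𝓑 → Type*) (L : (b : 𝓑) → A b → ℝ≥0∞)
    (δ : (b : 𝓑) → Y → A b) (S : Y → ℝ≥0∞) : Prop :=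
  ∀ b : 𝓑, ∀ y : Y, L b (δ b y) ≤ S y

/-- δ' is Type-II strictly better than δ. -/
def TypeIIStrictlyBetter [MeasurableSpace Y] (H0 : Set (Measure Y))
    (A : 𝓑 → Type*) (L : (b : 𝓑) → A b → ℝ≥0∞)
    (δ' δ : (b : 𝓑) → Y → A b) : Prop :=
  (∀ b : 𝓑, ∀ y : Y, L b (δ b y) ≤ L b (δ' b y)) ∧
  (∃ b : 𝓑, ∃ y : Y, ∃ P ∈ H0, 0 < P {y} ∧ L b (δ b y) < L b (δ' b y))

/-- δ is Type-I risk safe: compatible with some e-variable for H0. -/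
def TypeIRiskSafe [MeasurableSpace Y] (H0 : Set (Measure Y))
    (A : 𝓑 → Type*) (L : (b : 𝓑) → A b → ℝ≥0∞)
    (δ : (b : 𝓑) → Y → A b) : Prop :=
  ∃ S : Y → ℝ≥0∞, Measurable S ∧ (∀ P ∈ H0, ∫⁻ y, S y ∂P ≤ 1) ∧ Compatible A L δ S

/-- δ is admissible. -/
def Admissible [MeasurableSpace Y] (H0 : Set (Measure Y))
    (A : 𝓑 → Type*) (L : (b : 𝓑) → A b → ℝ≥0∞)
    (δ : (b : 𝓑) → Y → A b) : Prop :=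
  TypeIRiskSafe H0 A L δ ∧
  ¬ ∃ δ' : (b : 𝓑) → Y → A b, TypeIRiskSafe H0 A L δ' ∧
      TypeIIStrictlyBetter H0 A L δ' δ

/-- δ is maximally compatible with S. -/
def MaximallyCompatible [MeasurableSpace Y] (H0 : Set (Measure Y))
    (A : 𝓑 → Type*) (L : (b : 𝓑) → A b → ℝ≥0∞)
    (δ : (b : 𝓑) → Y → A b) (S : Y → ℝ≥0∞) : Prop :=
  Compatible A L δ S ∧
  ¬ ∃ δ' : (b : 𝓑) → Y → A b, Compatible A L δ' S ∧
      TypeIIStrictlyBetter H0 A L δ' δ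

/-!
Richness lets `δ*` reach the bound `S y` at every outcome `y`: otherwise raising the loss at one
`(b, y)` to `S y` would give a strictly better rule compatible with `S`. Hence any risk-safe rule
that is Type-II at least as good as `δ*` is compatible with some e-variable `S' ≥ S`. Sharpness
gives `∫ S' dP₀ ≤ 1 = ∫ S dP₀`, so `S' = S` `P₀`-a.e., and by full support everywhere; the better
rule is then compatible with `S` itself, contradicting maximal compatibility.
-/

section UpdateRule

variable [DecidableEq 𝓑] [DecidableEq Y] {A : 𝓑 → Type*}
  {L : (b : 𝓑) → A b → ℝ≥0∞} {δ : (b : 𝓑) → Y → A b} {b : 𝓑} {y : Y} {a : A b}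

def updateRule (δ : (b : 𝓑) → Y → A b) (b : 𝓑) (y : Y) (a : A b) : (b : 𝓑) → Y → A b :=
  Function.update δ b (Function.update (δ b) y a)

lemma updateRule_of_ne_left {b' : 𝓑} (hb : b' ≠ b) (y' : Y) :
    updateRule δ b y a b' y' = δ b' y' := by
  rw [updateRule, Function.update_of_ne hb]

lemma updateRule_of_ne_right {y' : Y} (hy : y' ≠ y) : updateRule δ b y a b y' = δ b y' := by
  rw [updateRule, Function.update_self, Function.update_of_ne hy]

lemma updateRule_self : updateRule δ b y a b y = a := by
  rw [updateRule, Function.update_self, Function.update_self]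

lemma Compatible.updateRule {S : Y → ℝ≥0∞} (hδ : Compatible A L δ S) (ha : L b a ≤ S y) :
    Compatible A L (updateRule δ b y a) S := by
  intro b' y'
  by_cases hb : b' = b
  · subst hb
    by_cases hy : y' = y
    · subst hy
      rwa [updateRule_self]
    · rw [updateRule_of_ne_right hy]
      exact hδ b' y'
  · rw [updateRule_of_ne_left hb]
    exact hδ b' y'

lemma typeIIStrictlyBetter_updateRule [MeasurableSpace Y] {H0 : Set (Measure Y)}
    {P : Measure Y} (hP : P ∈ H0) (hy : 0 < P {y}) (ha : L b (δ b y) < L b a) :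
    TypeIIStrictlyBetter H0 A L (updateRule δ b y a) δ := by
  refine ⟨fun b' y' => ?_, b, y, P, hP, hy, by rwa [updateRule_self]⟩
  by_cases hb : b' = b
  · subst hb
    by_cases hy : y' = y
    · subst hy
      rw [updateRule_self]
      exact ha.le
    · rw [updateRule_of_ne_right hy]
  · rw [updateRule_of_ne_left hb]

end UpdateRule

section

variable [MeasurableSpace Y] {H0 : Set (Measure Y)} {A : 𝓑 → Type*}
  {L : (b : 𝓑) → A b → ℝ≥0∞} {δ : (b : 𝓑) → Y → A b} {S : Y → ℝ≥0∞}

lemma MaximallyCompatible.loss_eq {P : Measure Y} (hδ : MaximallyCompatible H0 A L δ S)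
    (hP : P ∈ H0) {y : Y} (hy : 0 < P {y}) {b : 𝓑} {a : A b} (ha : L b a = S y) :
    L b (δ b y) = S y := by
  classical
  refine le_antisymm (hδ.1 b y) (not_lt.1 fun hlt => hδ.2 ?_)
  exact ⟨updateRule δ b y a, hδ.1.updateRule ha.le,
    typeIIStrictlyBetter_updateRule hP hy (ha ▸ hlt)⟩

lemma eq_of_ae_eq_of_forall_measure_singleton_pos {β : Type*} {μ : Measure Y}
    (hμ : ∀ y, 0 < μ {y}) {f g : Y → β} (hfg : f =ᵐ[μ] g) : f = g :=
  funext fun y => by_contra fun hne =>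
    (hμ y).ne' (measure_mono_null (Set.singleton_subset_iff.2 hne) (ae_iff.1 hfg))

lemma eq_of_le_of_lintegral_le {μ : Measure Y} (hμ : ∀ y, 0 < μ {y}) {f g : Y → ℝ≥0∞}
    (hfg : f ≤ g) (hf : ∫⁻ y, f y ∂μ ≠ ∞) (hg : Measurable g)
    (hgf : ∫⁻ y, g y ∂μ ≤ ∫⁻ y, f y ∂μ) : f = g :=
  eq_of_ae_eq_of_forall_measure_singleton_pos hμ
    (ae_eq_of_ae_le_of_lintegral_le (Filter.Eventually.of_forall hfg) hf hg.aemeasurable hgf)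

end

theorem maximally_compatible_implies_admissible_general
    [MeasurableSpace Y]
    (H0 : Set (Measure Y))
    (hfull : ∀ P ∈ H0, ∀ y : Y, 0 < P {y})
    (A : 𝓑 → Type*) (L : (b : 𝓑) → A b → ℝ≥0∞) (δstar : (b : 𝓑) → Y → A b)
    (S : Y → ℝ≥0∞) (hSm : Measurable S)
    (hSe : ∀ P ∈ H0, ∫⁻ y, S y ∂P ≤ 1)
    (hsharp : ∃ P0 ∈ H0, ∫⁻ y, S y ∂P0 = 1)
    (hmax : MaximallyCompatible H0 A L δstar S)
    (hrich : ∀ y : Y, ∃ b : 𝓑, ∃ a : A b, L b a = S y) :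
    Admissible H0 A L δstar := by
  obtain ⟨P0, hP0, hP0S⟩ := hsharp
  have hattain : ∀ y, ∃ b, L b (δstar b y) = S y := fun y => by
    obtain ⟨b, a, ha⟩ := hrich y
    exact ⟨b, hmax.loss_eq hP0 (hfull P0 hP0 y) ha⟩
  refine ⟨⟨S, hSm, hSe, hmax.1⟩, ?_⟩
  rintro ⟨δ', ⟨S', hS'm, hS'e, hδ'S'⟩, hbetter⟩
  have hSS' : S ≤ S' := fun y => by
    obtain ⟨b, hb⟩ := hattain y
    exact hb ▸ (hbetter.1 b y).trans (hδ'S' b y)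
  have hS'S : S = S' := eq_of_le_of_lintegral_le (hfull P0 hP0) hSS' (by simp [hP0S]) hS'm
    ((hS'e P0 hP0).trans hP0S.ge)
  exact hmax.2 ⟨δ', hS'S ▸ hδ'S', hbetter⟩

/-- Theorem, countable case, Part 2: if S is a sharp e-variable, δ* is
maximally compatible with S, and the problem is rich relative to S, then δ* is
admissible. -/
theorem maximally_compatible_implies_admissible
    [Countable Y] [MeasurableSpace Y] [MeasurableSingletonClass Y]
    (H0 : Set (Measure Y)) (hprob : ∀ P ∈ H0, IsProbabilityMeasure P)
    (hfull : ∀ P ∈ H0, ∀ y : Y, 0 < P {y})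
    (A : 𝓑 → Type*) (L : (b : 𝓑) → A b → ℝ≥0∞) (δstar : (b : 𝓑) → Y → A b)
    (S : Y → ℝ≥0∞) (hSm : Measurable S)
    (hSe : ∀ P ∈ H0, ∫⁻ y, S y ∂P ≤ 1)
    (hsharp : ∃ P0 ∈ H0, ∫⁻ y, S y ∂P0 = 1)
    (hmax : MaximallyCompatible H0 A L δstar S)
    (hrich : ∀ y : Y, ∃ b : 𝓑, ∃ a : A b, L b a = S y) :
    Admissible H0 A L δstar :=
  maximally_compatible_implies_admissible_general H0 hfull A L δstar S hSm hSe hsharp hmax hrich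
end

section
/- Under the standard normal distribution P0 (mean 0, variance 1), for any ε > 0, the integral ∫_ε^∞ f0(y) · 1/(2·F0(ε²/y − y)) dy diverges to +∞, where f0 and F0 are the standard normal density and CDF and the choice g0(y) = ε²/y is made. In particular, the expected post-hoc loss E_{P0}[B(Y)·1{Y ≥ ε}] with B(y) = 1/(2F0(−y + ε²/y)) is infinite. -/
/-!
Mills' bound `F0(-c) ≤ f0(c) / c`, obtained by integrating `f0'(t) = -t f0(t)`, gives for
`c = y - ε²/y ≥ 1` that `F0(ε²/y - y) ≤ f0(y - ε²/y) ≤ e^{ε²} f0(y)`. So the integrand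
`f0(y) / (2 F0(ε²/y - y))` stays above `e^{-ε²}/2` on `(ε + 1, ∞)`, and its integral over that
half-line is infinite. The expectation under `P0` is the same integral.
-/

open MeasureTheory ProbabilityTheory Real Set Filter
open scoped NNReal ENNReal Topology

namespace ProbabilityTheory

lemma hasDerivAt_gaussianPDFReal (μ : ℝ) (v : ℝ≥0) (x : ℝ) :
    HasDerivAt (gaussianPDFReal μ v) (-((x - μ) / v) * gaussianPDFReal μ v x) x := by
  have hexp : HasDerivAt (fun x => -(x - μ) ^ 2 / (2 * v)) (-((x - μ) / v)) x :=
    (((hasDerivAt_id x).sub_const μ).pow 2).neg.div_const (2 * (v : ℝ)) |>.congr_deriv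
      (by simp only [id]; ring)
  rw [gaussianPDFReal_def]
  exact (hexp.exp.const_mul _).congr_deriv (by ring)

lemma tendsto_gaussianPDFReal_atBot (μ : ℝ) {v : ℝ≥0} (hv : v ≠ 0) :
    Tendsto (gaussianPDFReal μ v) atBot (𝓝 0) := by
  have hsq : Tendsto (fun x : ℝ => (x - μ) ^ 2) atBot atTop :=
    (tendsto_pow_atTop two_ne_zero).comp
      (tendsto_neg_atBot_atTop.comp (tendsto_atBot_add_const_right _ (-μ) tendsto_id)) |>.congr
      fun x => by simp only [Function.comp_apply, id]; ring
  have hv' : (0 : ℝ) < 2 * v := by positivity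
  rw [gaussianPDFReal_def]
  simpa using
    ((tendsto_exp_atBot.comp ((tendsto_neg_atTop_atBot.comp hsq).atBot_div_const hv')).const_mul
      (√(2 * π * v))⁻¹)

lemma integrable_sub_mul_gaussianPDFReal (μ : ℝ) (v : ℝ≥0) :
    Integrable fun x => (x - μ) * gaussianPDFReal μ v x := by
  rcases eq_or_ne v 0 with rfl | hv
  · simp [gaussianPDFReal_zero_var]
  have hid : Integrable id (gaussianReal μ v) := (memLp_id_gaussianReal 1).integrable le_rfl
  rw [gaussianReal_of_var_ne_zero μ hv, integrable_withDensity_iff_integrable_smul'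
    (measurable_gaussianPDF μ v) (.of_forall fun _ => gaussianPDF_lt_top)] at hid
  simp only [toReal_gaussianPDF, id, smul_eq_mul] at hid
  exact (hid.sub ((integrable_gaussianPDFReal μ v).const_mul μ)).congr
    (.of_forall fun x => by simp only [Pi.sub_apply]; ring)

lemma gaussianPDFReal_mean_sub (μ : ℝ) (v : ℝ≥0) (x : ℝ) :
    gaussianPDFReal μ v (μ - x) = gaussianPDFReal μ v (μ + x) := by
  simp only [gaussianPDFReal_def]; ring_nf

lemma setIntegral_Iic_gaussianPDFReal_le (μ : ℝ) {v : ℝ≥0} (hv : v ≠ 0) {c : ℝ} (hc : 0 < c) :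
    ∫ t in Iic (μ - c), gaussianPDFReal μ v t ≤ v / c * gaussianPDFReal μ v (μ + c) := by
  have hderiv_int : Integrable fun t => -((t - μ) / v) * gaussianPDFReal μ v t :=
    ((integrable_sub_mul_gaussianPDFReal μ v).const_mul (-(v : ℝ)⁻¹)).congr
      (.of_forall fun t => by ring)
  have hFTC : ∫ t in Iic (μ - c), -((t - μ) / v) * gaussianPDFReal μ v t
      = gaussianPDFReal μ v (μ + c) := by
    rw [integral_Iic_of_hasDerivAt_of_tendsto' (fun t _ => hasDerivAt_gaussianPDFReal μ v t)
      hderiv_int.integrableOn (tendsto_gaussianPDFReal_atBot μ hv), sub_zero,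
      gaussianPDFReal_mean_sub]
  calc ∫ t in Iic (μ - c), gaussianPDFReal μ v t
      ≤ ∫ t in Iic (μ - c), v / c * (-((t - μ) / v) * gaussianPDFReal μ v t) := by
        refine setIntegral_mono_on (integrable_gaussianPDFReal μ v).integrableOn
          (hderiv_int.const_mul _).integrableOn measurableSet_Iic fun t ht => ?_
        have hratio : 1 ≤ v / c * (-((t - μ) / v)) := by
          have hv' : (v : ℝ) ≠ 0 := by exact_mod_cast hv
          rw [show v / c * (-((t - μ) / v)) = (μ - t) / c by field_simp; ring, le_div_iff₀ hc]
          linarith [mem_Iic.mp ht]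
        exact (le_mul_of_one_le_left (gaussianPDFReal_nonneg μ v t) hratio).trans_eq
          (mul_assoc _ _ _)
    _ = v / c * gaussianPDFReal μ v (μ + c) := by rw [integral_const_mul, hFTC]

lemma gaussianPDFReal_sub_mul_exp_le (μ : ℝ) (v : ℝ≥0) (a y : ℝ) :
    gaussianPDFReal μ v (y - a) * exp (-(a * (y - μ) / v)) ≤ gaussianPDFReal μ v y := by
  simp only [gaussianPDFReal_def, mul_assoc, ← exp_add]
  gcongr
  have hexponent : -(y - a - μ) ^ 2 / (2 * v) + -(a * (y - μ) / v)
      = -(y - μ) ^ 2 / (2 * v) - a ^ 2 / (2 * v) := by ring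
  linarith [show 0 ≤ a ^ 2 / (2 * v) by positivity]

lemma setIntegral_Iic_gaussianPDFReal_pos (μ : ℝ) {v : ℝ≥0} (hv : v ≠ 0) (x : ℝ) :
    0 < ∫ t in Iic x, gaussianPDFReal μ v t := by
  rw [setIntegral_pos_iff_support_of_nonneg_ae (.of_forall (gaussianPDFReal_nonneg μ v))
    (integrable_gaussianPDFReal μ v).integrableOn,
    Function.support_eq_univ fun t => (gaussianPDFReal_pos μ v t hv).ne', univ_inter]
  simp

end ProbabilityTheory

lemma exp_neg_mul_div_two_le_gaussianPDFReal_div {a y : ℝ} (hya : 1 ≤ y - a) :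
    exp (-(a * y)) / 2
      ≤ gaussianPDFReal 0 1 y / (2 * ∫ t in Iic (a - y), gaussianPDFReal 0 1 t) := by
  set c := y - a
  have htail : ∫ t in Iic (a - y), gaussianPDFReal 0 1 t ≤ gaussianPDFReal 0 1 c := by
    have h := setIntegral_Iic_gaussianPDFReal_le 0 one_ne_zero (c := c) (by linarith)
    rw [zero_sub, zero_add, neg_sub] at h
    refine h.trans (mul_le_of_le_one_left (gaussianPDFReal_nonneg 0 1 c) ?_)
    rw [NNReal.coe_one, div_le_one (by linarith)]
    exact hya
  have hshift : gaussianPDFReal 0 1 c * exp (-(a * y)) ≤ gaussianPDFReal 0 1 y := by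
    simpa using gaussianPDFReal_sub_mul_exp_le 0 1 a y
  have hpc := gaussianPDFReal_pos 0 1 c one_ne_zero
  calc exp (-(a * y)) / 2
      = gaussianPDFReal 0 1 c * exp (-(a * y)) / (2 * gaussianPDFReal 0 1 c) := by
        field_simp
    _ ≤ gaussianPDFReal 0 1 y / (2 * ∫ t in Iic (a - y), gaussianPDFReal 0 1 t) := by
        gcongr
        · exact gaussianPDFReal_nonneg 0 1 y
        · exact mul_pos two_pos (setIntegral_Iic_gaussianPDFReal_pos 0 one_ne_zero _)

lemma setLIntegral_Ioi_eq_top_of_le {f : ℝ → ℝ≥0∞} {k : ℝ≥0∞} (hk : k ≠ 0) {a : ℝ}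
    (h : ∀ y ∈ Ioi a, k ≤ f y) : ∫⁻ y in Ioi a, f y = ⊤ := by
  refine top_unique ?_
  calc ⊤ = ∫⁻ _ in Ioi a, k := by rw [setLIntegral_const, volume_Ioi, ENNReal.mul_top hk]
    _ ≤ ∫⁻ y in Ioi a, f y := setLIntegral_mono' measurableSet_Ioi h

/-- Under the standard normal P0, with g0(y) = ε²/y and
B(y) = 1/(2·F0(ε²/y − y)), the integral ∫_ε^∞ f0(y)/(2F0(ε²/y − y)) dy diverges; in
particular the expected post-hoc loss E_{P0}[B(Y)·1{Y ≥ ε}] is infinite. -/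
theorem posthoc_loss_infinite (ε : ℝ) (hε : 0 < ε)
    (f0 : ℝ → ℝ) (hf0 : f0 = fun y => (Real.sqrt (2*π))⁻¹ * Real.exp (-(y^2)/2))
    (F0 : ℝ → ℝ) (hF0 : F0 = fun x => ∫ t in Set.Iic x, f0 t)
    (P0 : Measure ℝ)
    (hP0 : P0 = volume.withDensity (fun y => ENNReal.ofReal (f0 y)))
    (B : ℝ → ℝ) (hB : B = fun y => 1 / (2 * F0 (ε^2/y - y))) :
    (∫⁻ y in Set.Ioi ε, ENNReal.ofReal (f0 y / (2 * F0 (ε^2/y - y)))) = ⊤ ∧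
    (∫⁻ y, ENNReal.ofReal (B y) * (Set.Ici ε).indicator (fun _ => (1:ENNReal)) y ∂P0)
      = ⊤ := by
  obtain rfl : f0 = gaussianPDFReal 0 1 := by
    rw [hf0, gaussianPDFReal_def]; simp
  subst hF0 hP0 hB
  have hk : ENNReal.ofReal (exp (-ε ^ 2) / 2) ≠ 0 := by positivity
  have hbound : ∀ y ∈ Ioi (ε + 1), ENNReal.ofReal (exp (-ε ^ 2) / 2)
      ≤ ENNReal.ofReal (gaussianPDFReal 0 1 y / (2 * ∫ t in Iic (ε ^ 2 / y - y),
        gaussianPDFReal 0 1 t)) := by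
    intro y (hy : ε + 1 < y)
    have hy0 : 0 < y := by linarith
    have hfrac : ε ^ 2 / y ≤ ε := by
      rw [div_le_iff₀ hy0]; nlinarith
    have h := exp_neg_mul_div_two_le_gaussianPDFReal_div (a := ε ^ 2 / y) (y := y)
      (by linarith)
    rw [div_mul_cancel₀ _ hy0.ne'] at h
    exact ENNReal.ofReal_le_ofReal h
  constructor
  · exact top_unique <| (setLIntegral_Ioi_eq_top_of_le hk hbound).ge.trans
      (lintegral_mono_set (Ioi_subset_Ioi (by linarith)))
  · rw [lintegral_withDensity_eq_lintegral_mul_non_measurable _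
      (measurable_gaussianPDFReal 0 1).ennreal_ofReal (.of_forall fun _ => ENNReal.ofReal_lt_top)]
    refine top_unique <| (setLIntegral_Ioi_eq_top_of_le (a := ε + 1) hk fun y hy => ?_).ge.trans
      (setLIntegral_le_lintegral _ _)
    rw [Pi.mul_apply, indicator_of_mem (mem_Ici.mpr (by linarith [mem_Ioi.mp hy])), mul_one,
      ← ENNReal.ofReal_mul (gaussianPDFReal_nonneg 0 1 y), mul_one_div]
    exact hbound y hy
end

section
/- Let S be an e-variable for H0 and define the e-posterior P̄(θ0 | y) = 1/S(y) for the null parameter θ0 (with 1/0 = ∞). If a decision rule δ satisfies sup over the considered parameters of P̄(θ | y)·L_b(θ, δ_b(y)) ≤ 1 for all y and b (using the convention 0·∞ = 0 when the loss is 0), then for all P ∈ H(θ): E_P[sup_b L_b(θ, δ_b(Y))] ≤ 1, provided the supremum is measurable. -/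
open MeasureTheory ENNReal

/-- If the e-posterior P̄(θ|y) = 1/S_θ(y) satisfies
P̄(θ|y)·L_b(θ, δ_b(y)) ≤ 1 for all y, b, θ (conventions: 1/0 = ∞, 0·∞ = 0), then for
every θ and every P in the model with φ(P) = θ, E_P[sup_b L_b(θ, δ_b(Y))] ≤ 1,
provided the supremum is measurable. -/
theorem eposterior_typeI_risk_safe {Ω Θ 𝓑 : Type*} [MeasurableSpace Ω]
    (Pfam : Set (Measure Ω)) (φ : Measure Ω → Θ)
    (S : Θ → Ω → ℝ≥0∞) (hSm : ∀ θ, Measurable (S θ))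
    (hSe : ∀ θ : Θ, ∀ P ∈ Pfam, φ P = θ → ∫⁻ ω, S θ ω ∂P ≤ 1)
    (A : 𝓑 → Type*) (L : (b : 𝓑) → Θ → A b → ℝ≥0∞) (δ : (b : 𝓑) → Ω → A b)
    (hpost : ∀ y : Ω, ∀ b : 𝓑, ∀ θ : Θ, (S θ y)⁻¹ * L b θ (δ b y) ≤ 1)
    (θ : Θ) (hsupm : Measurable fun ω => ⨆ b : 𝓑, L b θ (δ b ω))
    (P : Measure Ω) (hP : P ∈ Pfam) (hφ : φ P = θ) :
    ∫⁻ ω, ⨆ b : 𝓑, L b θ (δ b ω) ∂P ≤ 1 := by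
  have key : ∀ y b, L b θ (δ b y) ≤ S θ y := by
    intro y b
    have h := hpost y b θ
    rcases eq_or_ne (S θ y) 0 with h0 | h0
    · rw [h0, ENNReal.inv_zero] at h
      rcases eq_or_ne (L b θ (δ b y)) 0 with hL | hL
      · simp [hL]
      · rw [ENNReal.top_mul hL] at h; exact absurd h (by simp)
    · rcases eq_or_ne (S θ y) ⊤ with ht | ht
      · simp [ht]
      · calc L b θ (δ b y) = S θ y * ((S θ y)⁻¹ * L b θ (δ b y)) := by
              rw [← mul_assoc, ENNReal.mul_inv_cancel h0 ht, one_mul]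
          _ ≤ S θ y * 1 := mul_le_mul_right h _
          _ = S θ y := mul_one _
  calc ∫⁻ ω, ⨆ b : 𝓑, L b θ (δ b ω) ∂P ≤ ∫⁻ ω, S θ ω ∂P :=
        lintegral_mono fun ω => iSup_le fun b => key ω b
    _ ≤ 1 := hSe θ P hP hφ
end
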